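/- Let f be a function on [0,1]^d which has bounded HK0-variation. Then f has bounded HK-variation as well, and V_HK(f) ≤ (2^d − 1)·V_HK0(f). The same statement holds with the roles of the HK0-variation and the HK-variation interchanged: if f has bounded HK-variation then V_HK0(f) ≤ (2^d − 1)·V_HK(f). -/
import Mathlib


open MeasureTheory Finset

noncomputable section

/-- The quasi-volume `Δ` of `f` over the box `[a,b]` in the coordinates of `S`;
the coordinates outside `S` are fixed according to the anchor point `p`. -/
def quasiVol {d : ℕ} (f : (Fin d → ℝ) → ℝ) (S : Finset (Fin d)) (p a b : Fin d → ℝ) : ℝ :=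
  ∑ T ∈ S.powerset, (-1 : ℝ) ^ T.card *
    f (fun i => if i ∈ S then (if i ∈ T then a i else b i) else p i)

/-- A grid (a partition generated by one-dimensional partitions of the sides) of the
box `[lo, hi]` in the coordinates of `S`. -/
structure Grid (d : ℕ) (S : Finset (Fin d)) (lo hi : Fin d → ℝ) where
  m : Fin d → ℕ
  t : Fin d → ℕ → ℝ
  mono : ∀ i ∈ S, ∀ j k : ℕ, j ≤ k → k ≤ m i → t i j ≤ t i k
  first : ∀ i ∈ S, t i 0 = lo i
  last : ∀ i ∈ S, t i (m i) = hi i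

/-- The sum, over all cells of a grid, of the absolute value of the quasi-volume of the cell. -/
def gridSum {d : ℕ} (f : (Fin d → ℝ) → ℝ) (S : Finset (Fin d)) (p lo hi : Fin d → ℝ)
    (G : Grid d S lo hi) : ℝ :=
  ∑ k ∈ Fintype.piFinset (fun i => Finset.range (if i ∈ S then G.m i else 1)),
    |quasiVol f S p (fun i => G.t i (k i)) (fun i => G.t i (k i + 1))|

/-- The variation in the sense of Vitali of `f` on the face of the box `[lo, hi]` with active
coordinates `S`, the remaining coordinates being fixed according to the anchor `p`:
the supremum of `gridSum` over all grids. -/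
def vitaliVar {d : ℕ} (f : (Fin d → ℝ) → ℝ) (S : Finset (Fin d)) (p lo hi : Fin d → ℝ) : ℝ :=
  sSup (Set.range (gridSum f S p lo hi))

/-- The Vitali variation on the face `(S, p)` of `[lo, hi]` is bounded (finite). -/
def BddVitali {d : ℕ} (f : (Fin d → ℝ) → ℝ) (S : Finset (Fin d)) (p lo hi : Fin d → ℝ) : Prop :=
  BddAbove (Set.range (gridSum f S p lo hi))

/-- Hardy–Krause-type variation of `f` on the box `[lo, hi]` with anchor `p`: the sum, over all
nonempty sets `S` of coordinates, of the Vitali variation of the restriction of `f` to the face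
of `[lo, hi]` whose coordinates outside `S` are fixed according to `p`. -/
def hkVarOn {d : ℕ} (f : (Fin d → ℝ) → ℝ) (p lo hi : Fin d → ℝ) : ℝ :=
  ∑ S ∈ (Finset.univ : Finset (Fin d)).powerset.erase ∅, vitaliVar f S p lo hi

/-- All the Vitali variations occurring in `hkVarOn` are bounded. -/
def BddHKVarOn {d : ℕ} (f : (Fin d → ℝ) → ℝ) (p lo hi : Fin d → ℝ) : Prop :=
  ∀ S ∈ (Finset.univ : Finset (Fin d)).powerset.erase ∅, BddVitali f S p lo hi

/-- The Hardy–Krause variation of `f` on `[0,1]^d`, anchored at `1`. -/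
def hkVar {d : ℕ} (f : (Fin d → ℝ) → ℝ) : ℝ := hkVarOn f 1 0 1

/-- `f` has bounded Hardy–Krause variation (anchored at `1`). -/
def BddHKVar {d : ℕ} (f : (Fin d → ℝ) → ℝ) : Prop := BddHKVarOn f 1 0 1

/-- The Hardy–Krause variation of `f` on the box `[0, a]`, anchored at `0`. -/
def hkVar0On {d : ℕ} (f : (Fin d → ℝ) → ℝ) (a : Fin d → ℝ) : ℝ := hkVarOn f 0 0 a

/-- The Hardy–Krause variation of `f` on `[0,1]^d`, anchored at `0`. -/
def hkVar0 {d : ℕ} (f : (Fin d → ℝ) → ℝ) : ℝ := hkVarOn f 0 0 1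

/-- `f` has bounded Hardy–Krause variation anchored at `0`. -/
def BddHKVar0 {d : ℕ} (f : (Fin d → ℝ) → ℝ) : Prop := BddHKVarOn f 0 0 1

/-- `f` is completely monotone: every quasi-volume of an axis-parallel box contained in a face
of `[0,1]^d` (coordinates outside the active set `S` being fixed at `0` or `1`) is nonnegative. -/
def CompletelyMonotone {d : ℕ} (f : (Fin d → ℝ) → ℝ) : Prop :=
  ∀ S : Finset (Fin d), S.Nonempty → ∀ p : Fin d → ℝ, (∀ i ∉ S, p i = 0 ∨ p i = 1) →
    ∀ a b : Fin d → ℝ, a ∈ Set.Icc (0 : Fin d → ℝ) 1 → b ∈ Set.Icc (0 : Fin d → ℝ) 1 →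
      a ≤ b → 0 ≤ quasiVol f S p a b

/-- `f` is coordinatewise right-continuous at every point of `[0,1]^d`. -/
def RightCts {d : ℕ} (f : (Fin d → ℝ) → ℝ) : Prop :=
  ∀ x ∈ Set.Icc (0 : Fin d → ℝ) 1, ∀ i : Fin d,
    Filter.Tendsto (fun y : ℝ => f (Function.update x i y))
      (nhdsWithin (x i) (Set.Icc (x i) 1)) (nhds (f x))

/-- The star-discrepancy of the points `x 1, …, x N` with respect to the measure `μ`. -/
def starDisc {d : ℕ} (N : ℕ) (x : Fin N → Fin d → ℝ) (μ : Measure (Fin d → ℝ)) : ℝ :=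
  ⨆ a : Set.Icc (0 : Fin d → ℝ) 1,
    |(∑ n : Fin N, Set.indicator (Set.Icc 0 (a : Fin d → ℝ)) (fun _ => (1 : ℝ)) (x n)) / N
      - (μ (Set.Icc 0 (a : Fin d → ℝ))).toReal|


section HKProof

variable {d : ℕ} (f : (Fin d → ℝ) → ℝ)

lemma quasiVol_congr {S : Finset (Fin d)} {p p' a a' b b' : Fin d → ℝ}
    (hp : ∀ i ∉ S, p i = p' i) (ha : ∀ i ∈ S, a i = a' i) (hb : ∀ i ∈ S, b i = b' i) :
    quasiVol f S p a b = quasiVol f S p' a' b' := by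
  unfold quasiVol
  refine Finset.sum_congr rfl fun T hT => ?_
  have : (fun i => if i ∈ S then (if i ∈ T then a i else b i) else p i)
      = (fun i => if i ∈ S then (if i ∈ T then a' i else b' i) else p' i) := by
    funext i
    by_cases hiS : i ∈ S
    · by_cases hiT : i ∈ T <;> simp [hiS, hiT, ha i hiS, hb i hiS]
    · simp [hiS, hp i hiS]
  rw [this]

lemma quasiVol_insert {S : Finset (Fin d)} {j : Fin d} (hj : j ∉ S) (p a b : Fin d → ℝ) :
    quasiVol f (insert j S) p a b
      = quasiVol f S (Function.update p j (b j)) a b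
        - quasiVol f S (Function.update p j (a j)) a b := by
  unfold quasiVol
  rw [Finset.sum_powerset_insert hj, ← Finset.sum_sub_distrib, ← Finset.sum_add_distrib]
  refine Finset.sum_congr rfl fun T hT => ?_
  have hTS : T ⊆ S := Finset.mem_powerset.mp hT
  have hjT : j ∉ T := fun h => hj (hTS h)
  have e1 : (fun i => if i ∈ insert j S then (if i ∈ T then a i else b i) else p i)
      = (fun i => if i ∈ S then (if i ∈ T then a i else b i) else
          Function.update p j (b j) i) := by
    funext i
    by_cases hij : i = j
    · subst hij; simp [hj, hjT]
    · by_cases hiS : i ∈ S <;> simp [hiS, hij, Function.update_of_ne hij]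
  have e2 : (fun i => if i ∈ insert j S then (if i ∈ insert j T then a i else b i) else p i)
      = (fun i => if i ∈ S then (if i ∈ T then a i else b i) else
          Function.update p j (a j) i) := by
    funext i
    by_cases hij : i = j
    · subst hij; simp [hj]
    · by_cases hiS : i ∈ S <;> simp [hiS, hij, Function.update_of_ne hij]
  rw [e1, e2, Finset.card_insert_of_notMem hjT, pow_succ]
  ring

lemma quasiVol_decomp0 (C : Finset (Fin d)) :
    ∀ (S : Finset (Fin d)) (p a b : Fin d → ℝ), Disjoint S C → (∀ j ∈ C, p j = a j) →
    ∑ U ∈ C.powerset, quasiVol f (S ∪ U) p a b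
      = quasiVol f S (fun i => if i ∈ C then b i else p i) a b := by
  induction C using Finset.induction with
  | empty =>
    intro S p a b _ _
    simp only [Finset.powerset_empty, Finset.sum_singleton, Finset.union_empty,
      Finset.notMem_empty, if_false]
  | @insert j C' hj ih =>
    intro S p a b hdisj hpa
    have hjS : j ∉ S := fun h => (Finset.disjoint_left.mp hdisj h) (Finset.mem_insert_self j C')
    rw [Finset.sum_powerset_insert hj]
    have step : ∀ U ∈ C'.powerset,
        quasiVol f (S ∪ U) p a b + quasiVol f (S ∪ insert j U) p a b
          = quasiVol f (S ∪ U) (Function.update p j (b j)) a b := by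
      intro U hU
      have hUC' : U ⊆ C' := Finset.mem_powerset.mp hU
      have hjSU : j ∉ S ∪ U := by
        simp only [Finset.mem_union, not_or]
        exact ⟨hjS, fun h => hj (hUC' h)⟩
      have : S ∪ insert j U = insert j (S ∪ U) := by
        ext i; simp [Finset.mem_union, Finset.mem_insert, or_left_comm, or_comm]
      rw [this, quasiVol_insert f hjSU]
      have : Function.update p j (a j) = p := by
        rw [← hpa j (Finset.mem_insert_self j C'), Function.update_eq_self]
      rw [this]; ring
    rw [← Finset.sum_add_distrib, Finset.sum_congr rfl step,
      ih S (Function.update p j (b j)) a b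
        (Finset.disjoint_of_subset_right (Finset.subset_insert j C') hdisj)
        (fun k hk => by
          have hkj : k ≠ j := fun h => hj (h ▸ hk)
          rw [Function.update_of_ne hkj]
          exact hpa k (Finset.mem_insert_of_mem hk))]
    congr 1
    funext i
    by_cases hiC : i ∈ C'
    · have : i ≠ j := fun h => hj (h ▸ hiC)
      simp [hiC, Finset.mem_insert, this]
    · by_cases hij : i = j
      · subst hij; simp [hiC, hj]
      · simp [hiC, hij, Function.update_of_ne hij]

lemma quasiVol_decomp1 (C : Finset (Fin d)) :
    ∀ (S : Finset (Fin d)) (p a b : Fin d → ℝ), Disjoint S C → (∀ j ∈ C, p j = b j) →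
    ∑ U ∈ C.powerset, (-1 : ℝ) ^ U.card * quasiVol f (S ∪ U) p a b
      = quasiVol f S (fun i => if i ∈ C then a i else p i) a b := by
  induction C using Finset.induction with
  | empty =>
    intro S p a b _ _
    simp only [Finset.powerset_empty, Finset.sum_singleton, Finset.union_empty,
      Finset.card_empty, pow_zero, one_mul, Finset.notMem_empty, if_false]
  | @insert j C' hj ih =>
    intro S p a b hdisj hpb
    have hjS : j ∉ S := fun h => (Finset.disjoint_left.mp hdisj h) (Finset.mem_insert_self j C')
    rw [Finset.sum_powerset_insert hj]
    have step : ∀ U ∈ C'.powerset,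
        (-1 : ℝ) ^ U.card * quasiVol f (S ∪ U) p a b
          + (-1 : ℝ) ^ (insert j U).card * quasiVol f (S ∪ insert j U) p a b
          = (-1 : ℝ) ^ U.card * quasiVol f (S ∪ U) (Function.update p j (a j)) a b := by
      intro U hU
      have hUC' : U ⊆ C' := Finset.mem_powerset.mp hU
      have hjU : j ∉ U := fun h => hj (hUC' h)
      have hjSU : j ∉ S ∪ U := by
        simp only [Finset.mem_union, not_or]
        exact ⟨hjS, hjU⟩
      have e : S ∪ insert j U = insert j (S ∪ U) := by
        ext i; simp [Finset.mem_union, Finset.mem_insert, or_left_comm, or_comm]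
      rw [e, quasiVol_insert f hjSU, Finset.card_insert_of_notMem hjU, pow_succ]
      have : Function.update p j (b j) = p := by
        rw [← hpb j (Finset.mem_insert_self j C'), Function.update_eq_self]
      rw [this]; ring
    rw [← Finset.sum_add_distrib, Finset.sum_congr rfl step,
      ih S (Function.update p j (a j)) a b
        (Finset.disjoint_of_subset_right (Finset.subset_insert j C') hdisj)
        (fun k hk => by
          have hkj : k ≠ j := fun h => hj (h ▸ hk)
          rw [Function.update_of_ne hkj]
          exact hpb k (Finset.mem_insert_of_mem hk))]
    congr 1
    funext i
    by_cases hiC : i ∈ C'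
    · have : i ≠ j := fun h => hj (h ▸ hiC)
      simp [hiC, Finset.mem_insert, this]
    · by_cases hij : i = j
      · subst hij; simp [hiC, hj]
      · simp [hiC, hij, Function.update_of_ne hij]

lemma absDecomp0 (S : Finset (Fin d)) (a b : Fin d → ℝ)
    (hab : ∀ i ∉ S, a i = 0 ∧ b i = 1) :
    |quasiVol f S 1 a b| ≤ ∑ U ∈ Sᶜ.powerset, |quasiVol f (S ∪ U) 0 a b| := by
  have hdec := quasiVol_decomp0 f Sᶜ S 0 a b disjoint_compl_right
    (fun j hj => ((hab j (Finset.mem_compl.mp hj)).1).symm)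
  have he : quasiVol f S 1 a b = ∑ U ∈ Sᶜ.powerset, quasiVol f (S ∪ U) 0 a b := by
    rw [hdec]
    exact quasiVol_congr f
      (fun i hi => by simp [Finset.mem_compl.mpr hi, (hab i hi).2])
      (fun _ _ => rfl) (fun _ _ => rfl)
  rw [he]
  exact Finset.abs_sum_le_sum_abs _ _

lemma absDecomp1 (S : Finset (Fin d)) (a b : Fin d → ℝ)
    (hab : ∀ i ∉ S, a i = 0 ∧ b i = 1) :
    |quasiVol f S 0 a b| ≤ ∑ U ∈ Sᶜ.powerset, |quasiVol f (S ∪ U) 1 a b| := by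
  have hdec := quasiVol_decomp1 f Sᶜ S 1 a b disjoint_compl_right
    (fun j hj => ((hab j (Finset.mem_compl.mp hj)).2).symm)
  have he : quasiVol f S 0 a b
      = ∑ U ∈ Sᶜ.powerset, (-1 : ℝ) ^ U.card * quasiVol f (S ∪ U) 1 a b := by
    rw [hdec]
    exact quasiVol_congr f
      (fun i hi => by simp [Finset.mem_compl.mpr hi, (hab i hi).1])
      (fun _ _ => rfl) (fun _ _ => rfl)
  calc |quasiVol f S 0 a b|
      ≤ ∑ U ∈ Sᶜ.powerset, |(-1 : ℝ) ^ U.card * quasiVol f (S ∪ U) 1 a b| := by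
        rw [he]; exact Finset.abs_sum_le_sum_abs _ _
    _ = ∑ U ∈ Sᶜ.powerset, |quasiVol f (S ∪ U) 1 a b| := by
        refine Finset.sum_congr rfl fun U _ => ?_
        rw [abs_mul, abs_pow, abs_neg, abs_one, one_pow, one_mul]

/-- Extend a grid on `S` to a grid on any superset by a single `[0,1]` cell in each
new coordinate. -/
def extGrid {S : Finset (Fin d)} (G : Grid d S 0 1) (V : Finset (Fin d)) : Grid d V 0 1 where
  m i := if i ∈ S then G.m i else 1
  t i j := if i ∈ S then G.t i j else min (j : ℝ) 1
  mono i hi j k hjk hk := by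
    by_cases hiS : i ∈ S
    · simp only [hiS, if_true] at hk ⊢
      exact G.mono i hiS j k hjk hk
    · simp only [hiS, if_false]
      exact min_le_min (by exact_mod_cast hjk) le_rfl
  first i hi := by
    by_cases hiS : i ∈ S
    · simpa [hiS] using G.first i hiS
    · simp [hiS]
  last i hi := by
    by_cases hiS : i ∈ S
    · simpa [hiS] using G.last i hiS
    · simp [hiS]

def trivGrid (S : Finset (Fin d)) : Grid d S 0 1 where
  m _ := 1
  t _ j := min (j : ℝ) 1
  mono i _ j k hjk _ := min_le_min (by exact_mod_cast hjk) le_rfl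
  first i _ := by simp
  last i _ := by simp

lemma gridSum_nonneg (S : Finset (Fin d)) (p lo hi : Fin d → ℝ) (G : Grid d S lo hi) :
    0 ≤ gridSum f S p lo hi G :=
  Finset.sum_nonneg fun _ _ => abs_nonneg _

lemma gridSum_le_vitaliVar {S : Finset (Fin d)} {p lo hi : Fin d → ℝ}
    (h : BddVitali f S p lo hi) (G : Grid d S lo hi) :
    gridSum f S p lo hi G ≤ vitaliVar f S p lo hi :=
  le_csSup h ⟨G, rfl⟩

lemma vitaliVar_nonneg {S : Finset (Fin d)} {p : Fin d → ℝ}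
    (h : BddVitali f S p 0 1) : 0 ≤ vitaliVar f S p 0 1 :=
  le_trans (gridSum_nonneg f S p 0 1 (trivGrid S)) (gridSum_le_vitaliVar f h (trivGrid S))

lemma gridSum_decomp {S : Finset (Fin d)} (q pp : Fin d → ℝ)
    (hdec : ∀ a b : Fin d → ℝ, (∀ i ∉ S, a i = 0 ∧ b i = 1) →
      |quasiVol f S q a b| ≤ ∑ U ∈ Sᶜ.powerset, |quasiVol f (S ∪ U) pp a b|)
    (G : Grid d S 0 1) :
    gridSum f S q 0 1 G
      ≤ ∑ U ∈ Sᶜ.powerset, gridSum f (S ∪ U) pp 0 1 (extGrid G (S ∪ U)) := by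
  classical
  set E : Fin d → ℕ → ℝ := fun i j => if i ∈ S then G.t i j else min (j : ℝ) 1 with hE
  have hEt : ∀ U : Finset (Fin d), (extGrid G (S ∪ U)).t = E := fun U => rfl
  have hgs : ∀ U : Finset (Fin d), gridSum f (S ∪ U) pp 0 1 (extGrid G (S ∪ U))
      = ∑ k ∈ Fintype.piFinset (fun i => Finset.range (if i ∈ S then G.m i else 1)),
          |quasiVol f (S ∪ U) pp (fun i => E i (k i)) (fun i => E i (k i + 1))| := by
    intro U
    unfold gridSum
    have hidx : (fun i => Finset.range (if i ∈ S ∪ U then (extGrid G (S ∪ U)).m i else 1))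
        = (fun i => Finset.range (if i ∈ S then G.m i else 1)) := by
      funext i
      by_cases hiS : i ∈ S
      · simp [extGrid, hiS, Finset.mem_union]
      · by_cases hiU : i ∈ S ∪ U <;> simp [extGrid, hiS, hiU]
    rw [hidx]
    rfl
  calc gridSum f S q 0 1 G
      = ∑ k ∈ Fintype.piFinset (fun i => Finset.range (if i ∈ S then G.m i else 1)),
          |quasiVol f S q (fun i => E i (k i)) (fun i => E i (k i + 1))| := by
        unfold gridSum
        refine Finset.sum_congr rfl fun k _ => ?_
        congr 1
        exact quasiVol_congr f (fun _ _ => rfl)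
          (fun i hi => by simp [hE, hi]) (fun i hi => by simp [hE, hi])
    _ ≤ ∑ k ∈ Fintype.piFinset (fun i => Finset.range (if i ∈ S then G.m i else 1)),
          ∑ U ∈ Sᶜ.powerset,
            |quasiVol f (S ∪ U) pp (fun i => E i (k i)) (fun i => E i (k i + 1))| := by
        refine Finset.sum_le_sum fun k hk => ?_
        refine hdec _ _ fun i hi => ?_
        have hki : k i = 0 := by
          have := Fintype.mem_piFinset.mp hk i
          simp only [hi, if_false, Finset.mem_range, Nat.lt_one_iff] at this
          exact this
        constructor
        · simp [hE, hi, hki]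
        · simp [hE, hi, hki]
    _ = ∑ U ∈ Sᶜ.powerset, gridSum f (S ∪ U) pp 0 1 (extGrid G (S ∪ U)) := by
        rw [Finset.sum_comm]
        exact Finset.sum_congr rfl fun U _ => (hgs U).symm


lemma main_half (q pp : Fin d → ℝ)
    (hdec : ∀ (S : Finset (Fin d)) (a b : Fin d → ℝ), (∀ i ∉ S, a i = 0 ∧ b i = 1) →
      |quasiVol f S q a b| ≤ ∑ U ∈ Sᶜ.powerset, |quasiVol f (S ∪ U) pp a b|)
    (h : BddHKVarOn f pp 0 1) :
    BddHKVarOn f q 0 1 ∧ hkVarOn f q 0 1 ≤ ((2 : ℝ) ^ d - 1) * hkVarOn f pp 0 1 := by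
  classical
  set E := (Finset.univ : Finset (Fin d)).powerset.erase ∅ with hEdef
  have hmem : ∀ S : Finset (Fin d), S ≠ ∅ → ∀ U, U ⊆ Sᶜ → S ∪ U ∈ E := by
    intro S hS U _
    rw [hEdef, Finset.mem_erase]
    exact ⟨fun h0 => hS (Finset.union_eq_empty.mp h0).1,
      Finset.mem_powerset.mpr (Finset.subset_univ _)⟩
  have key : ∀ S ∈ E, ∀ G : Grid d S 0 1,
      gridSum f S q 0 1 G ≤ ∑ U ∈ Sᶜ.powerset, vitaliVar f (S ∪ U) pp 0 1 := by
    intro S hS G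
    refine (gridSum_decomp f q pp (hdec S) G).trans ?_
    refine Finset.sum_le_sum fun U hU => ?_
    exact gridSum_le_vitaliVar f
      (h _ (hmem S (Finset.mem_erase.mp hS).1 U (Finset.mem_powerset.mp hU))) _
  have hbdd : ∀ S ∈ E, BddVitali f S q 0 1 := by
    intro S hS
    refine ⟨∑ U ∈ Sᶜ.powerset, vitaliVar f (S ∪ U) pp 0 1, ?_⟩
    rintro x ⟨G, rfl⟩
    exact key S hS G
  have hvv : ∀ S ∈ E, vitaliVar f S q 0 1
      ≤ ∑ U ∈ Sᶜ.powerset, vitaliVar f (S ∪ U) pp 0 1 := by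
    intro S hS
    refine csSup_le ⟨_, ⟨trivGrid S, rfl⟩⟩ ?_
    rintro x ⟨G, rfl⟩
    exact key S hS G
  have himg : ∀ S ∈ E, ∑ U ∈ Sᶜ.powerset, vitaliVar f (S ∪ U) pp 0 1
      ≤ hkVarOn f pp 0 1 := by
    intro S hS
    have hinj : ∀ U1 ∈ Sᶜ.powerset, ∀ U2 ∈ Sᶜ.powerset,
        S ∪ U1 = S ∪ U2 → U1 = U2 := by
      intro U1 h1 U2 h2 he
      have d1 : Disjoint S U1 :=
        Disjoint.mono_right (Finset.mem_powerset.mp h1) disjoint_compl_right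
      have d2 : Disjoint S U2 :=
        Disjoint.mono_right (Finset.mem_powerset.mp h2) disjoint_compl_right
      rw [← Finset.union_sdiff_cancel_left d1, he, Finset.union_sdiff_cancel_left d2]
    rw [← Finset.sum_image (g := fun U => S ∪ U) (f := fun V => vitaliVar f V pp 0 1) hinj]
    unfold hkVarOn
    refine Finset.sum_le_sum_of_subset_of_nonneg ?_ ?_
    · intro V hV
      rw [Finset.mem_image] at hV
      obtain ⟨U, hU, rfl⟩ := hV
      exact hmem S (Finset.mem_erase.mp hS).1 U (Finset.mem_powerset.mp hU)
    · intro V hV _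
      exact vitaliVar_nonneg f (h V hV)
  refine ⟨hbdd, ?_⟩
  have hcard : (E.card : ℝ) = (2 : ℝ) ^ d - 1 := by
    have hc : E.card = 2 ^ d - 1 := by
      rw [hEdef, Finset.card_erase_of_mem (Finset.mem_powerset.mpr (Finset.empty_subset _)),
        Finset.card_powerset, Finset.card_univ, Fintype.card_fin]
    rw [hc, Nat.cast_sub Nat.one_le_two_pow, Nat.cast_pow, Nat.cast_ofNat, Nat.cast_one]
  calc hkVarOn f q 0 1 = ∑ S ∈ E, vitaliVar f S q 0 1 := rfl
    _ ≤ ∑ _S ∈ E, hkVarOn f pp 0 1 :=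
        Finset.sum_le_sum fun S hS => (hvv S hS).trans (himg S hS)
    _ = (E.card : ℝ) * hkVarOn f pp 0 1 := by rw [Finset.sum_const, nsmul_eq_mul]
    _ = ((2 : ℝ) ^ d - 1) * hkVarOn f pp 0 1 := by rw [hcard]


end HKProof

/-- Comparison of the HK-variations anchored at `0` and at `1`. -/
theorem stmt10 {d : ℕ} (f : (Fin d → ℝ) → ℝ) :
    (BddHKVar0 f → BddHKVar f ∧ hkVar f ≤ ((2 : ℝ) ^ d - 1) * hkVar0 f) ∧
    (BddHKVar f → BddHKVar0 f ∧ hkVar0 f ≤ ((2 : ℝ) ^ d - 1) * hkVar f) := by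
  constructor
  · intro h0
    exact main_half f 1 0 (fun S a b hab => absDecomp0 f S a b hab) h0
  · intro h1
    exact main_half f 0 1 (fun S a b hab => absDecomp1 f S a b hab) h1
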